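/- For every α, β in F, the 8-dimensional algebra S_{α,β}-bar is conservative, with associated multiplication F given on basis vectors by F(e_1,e_1)=-e_1, F(e_1,e_2)=-e_2, F(e_1,e_5)=-2e_1, F(e_2,e_1)=(1-α)e_2, F(e_2,e_5)=(-1-β)e_2, F(e_5,e_1)=-2e_1, F(e_5,e_2)=-2e_2, F(e_5,e_5)=-4e_1, all other values zero: the identity b(a(xy)-(ax)y-x(ay)) - a((bx)y) + (a(bx))y + (bx)(ay) - a(x(by)) + (ax)(by) + x(a(by)) = -F(a,b)(xy) + (F(a,b)x)y + x(F(a,b)y) holds for all a,b,x,y. -/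

import Mathlib

/-!
Both products are bilinear with explicit structure constants, so after expanding them
coordinatewise each of the eight coordinates of the identity becomes a polynomial identity in
α, β and the coordinates of a, b, x, y, which `ring` checks.
-/

def tbl (F : Type*) [Field F] (a b : F) : Fin 8 → Fin 8 → Fin 8 → F :=
  ![![![-1, 0, 0, 0, 0, 0, 0, 0], ![0, (-3+a), 0, 0, 0, 0, 0, 0], ![0, 0, (1-a), 0, 0, 0, 0, 0], ![0, 0, 0, (3-2*a), 0, 0, 0, 0], ![0, 0, 0, 0, -1, 0, 0, 0], ![0, 0, 0, 0, 0, (1-a), 0, 0], ![0, 0, 0, 0, 0, 0, (1-a), 0], ![0, 0, 0, 0, 0, 0, 0, -1]],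
    ![![0, 3, 0, 0, 0, 0, 0, 0], ![0, 0, 0, 0, 0, 0, 0, 0], ![0, 0, 0, 0, 0, 0, 0, 0], ![0, 0, 0, 0, 0, 0, 0, 0], ![0, 0, 0, 0, 0, 0, 0, 0], ![0, 0, 0, 0, 0, 0, 0, 0], ![0, 0, 0, 0, 0, 0, 0, 0], ![0, 0, 0, 0, 0, 0, 0, 0]],
    ![![0, 0, -2, 0, 0, 0, -a, 0], ![0, 0, 0, 0, 0, 0, 0, 0], ![0, 0, 0, -3, 0, 0, 0, 0], ![0, 0, 0, 0, 0, 0, 0, 0], ![0, 0, 0, 0, 0, 1, -b, 0], ![0, 0, 0, 0, 0, 0, 0, 0], ![0, 0, 0, 0, 0, 0, 0, 0], ![0, 0, 0, 0, 0, 0, 0, 0]],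
    ![![0, 0, 0, 0, 0, 0, 0, 0], ![0, 0, 0, 0, 0, 0, 0, 0], ![0, 0, 0, 0, 0, 0, 0, 0], ![0, 0, 0, 0, 0, 0, 0, 0], ![0, 0, 0, 0, 0, 0, 0, 0], ![0, 0, 0, 0, 0, 0, 0, 0], ![0, 0, 0, 0, 0, 0, 0, 0], ![0, 0, 0, 0, 0, 0, 0, 0]],
    ![![-2, 0, 0, 0, 0, 0, 0, 0], ![0, (-3+b), 0, 0, 0, 0, 0, 0], ![0, 0, (-1-b), 0, 0, 0, 0, 0], ![0, 0, 0, (-2*b), 0, 0, 0, 0], ![0, 0, 0, 0, -2, 0, 0, 0], ![0, 0, 0, 0, 0, (-1-b), 0, 0], ![0, 0, 0, 0, 0, 0, (-1-b), 0], ![0, 0, 0, 0, 0, 0, 0, -2]],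
    ![![0, 0, 2, 0, 0, 0, a, 0], ![0, 0, 0, 0, 0, 0, 0, 0], ![0, 0, 0, 3, 0, 0, 0, 0], ![0, 0, 0, 0, 0, 0, 0, 0], ![0, 0, 0, 0, 0, -1, b, 0], ![0, 0, 0, 0, 0, 0, 0, 0], ![0, 0, 0, 0, 0, 0, 0, 0], ![0, 0, 0, 0, 0, 0, 0, 0]],
    ![![0, 0, 2, 0, 0, 0, a, 0], ![0, 0, 0, 0, 0, 0, 0, 0], ![0, 0, 0, 3, 0, 0, 0, 0], ![0, 0, 0, 0, 0, 0, 0, 0], ![0, 0, 0, 0, 0, -1, b, 0], ![0, 0, 0, 0, 0, 0, 0, 0], ![0, 0, 0, 0, 0, 0, 0, 0], ![0, 0, 0, 0, 0, 0, 0, 0]],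
    ![![0, 0, 0, 0, 0, 0, 0, 0], ![0, 0, 0, 0, 0, 0, 0, 0], ![0, 0, 0, 0, 0, 0, 0, 0], ![0, 0, 0, 0, 0, 0, 0, 0], ![0, 0, 0, 0, 0, 0, 0, 0], ![0, 0, 0, 0, 0, 0, 0, 0], ![0, 0, 0, 0, 0, 0, 0, 0], ![0, 0, 0, 0, 0, 0, 0, 0]]]

def mul (F : Type*) [Field F] (a b : F) (x y : Fin 8 → F) : Fin 8 → F :=
  fun k => ∑ i, ∑ j, x i * y j * tbl F a b i j k

def ftbl (F : Type*) [Field F] (a b : F) : Fin 8 → Fin 8 → Fin 8 → F :=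
  ![![![-1, 0, 0, 0, 0, 0, 0, 0], ![0, -1, 0, 0, 0, 0, 0, 0], ![0, 0, 0, 0, 0, 0, 0, 0], ![0, 0, 0, 0, 0, 0, 0, 0], ![-2, 0, 0, 0, 0, 0, 0, 0], ![0, 0, 0, 0, 0, 0, 0, 0], ![0, 0, 0, 0, 0, 0, 0, 0], ![0, 0, 0, 0, 0, 0, 0, 0]],
    ![![0, (1-a), 0, 0, 0, 0, 0, 0], ![0, 0, 0, 0, 0, 0, 0, 0], ![0, 0, 0, 0, 0, 0, 0, 0], ![0, 0, 0, 0, 0, 0, 0, 0], ![0, (-1-b), 0, 0, 0, 0, 0, 0], ![0, 0, 0, 0, 0, 0, 0, 0], ![0, 0, 0, 0, 0, 0, 0, 0], ![0, 0, 0, 0, 0, 0, 0, 0]],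
    ![![0, 0, 0, 0, 0, 0, 0, 0], ![0, 0, 0, 0, 0, 0, 0, 0], ![0, 0, 0, 0, 0, 0, 0, 0], ![0, 0, 0, 0, 0, 0, 0, 0], ![0, 0, 0, 0, 0, 0, 0, 0], ![0, 0, 0, 0, 0, 0, 0, 0], ![0, 0, 0, 0, 0, 0, 0, 0], ![0, 0, 0, 0, 0, 0, 0, 0]],
    ![![0, 0, 0, 0, 0, 0, 0, 0], ![0, 0, 0, 0, 0, 0, 0, 0], ![0, 0, 0, 0, 0, 0, 0, 0], ![0, 0, 0, 0, 0, 0, 0, 0], ![0, 0, 0, 0, 0, 0, 0, 0], ![0, 0, 0, 0, 0, 0, 0, 0], ![0, 0, 0, 0, 0, 0, 0, 0], ![0, 0, 0, 0, 0, 0, 0, 0]],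
    ![![-2, 0, 0, 0, 0, 0, 0, 0], ![0, -2, 0, 0, 0, 0, 0, 0], ![0, 0, 0, 0, 0, 0, 0, 0], ![0, 0, 0, 0, 0, 0, 0, 0], ![-4, 0, 0, 0, 0, 0, 0, 0], ![0, 0, 0, 0, 0, 0, 0, 0], ![0, 0, 0, 0, 0, 0, 0, 0], ![0, 0, 0, 0, 0, 0, 0, 0]],
    ![![0, 0, 0, 0, 0, 0, 0, 0], ![0, 0, 0, 0, 0, 0, 0, 0], ![0, 0, 0, 0, 0, 0, 0, 0], ![0, 0, 0, 0, 0, 0, 0, 0], ![0, 0, 0, 0, 0, 0, 0, 0], ![0, 0, 0, 0, 0, 0, 0, 0], ![0, 0, 0, 0, 0, 0, 0, 0], ![0, 0, 0, 0, 0, 0, 0, 0]],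
    ![![0, 0, 0, 0, 0, 0, 0, 0], ![0, 0, 0, 0, 0, 0, 0, 0], ![0, 0, 0, 0, 0, 0, 0, 0], ![0, 0, 0, 0, 0, 0, 0, 0], ![0, 0, 0, 0, 0, 0, 0, 0], ![0, 0, 0, 0, 0, 0, 0, 0], ![0, 0, 0, 0, 0, 0, 0, 0], ![0, 0, 0, 0, 0, 0, 0, 0]],
    ![![0, 0, 0, 0, 0, 0, 0, 0], ![0, 0, 0, 0, 0, 0, 0, 0], ![0, 0, 0, 0, 0, 0, 0, 0], ![0, 0, 0, 0, 0, 0, 0, 0], ![0, 0, 0, 0, 0, 0, 0, 0], ![0, 0, 0, 0, 0, 0, 0, 0], ![0, 0, 0, 0, 0, 0, 0, 0], ![0, 0, 0, 0, 0, 0, 0, 0]]]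

def fmul (F : Type*) [Field F] (a b : F) (x y : Fin 8 → F) : Fin 8 → F :=
  fun k => ∑ i, ∑ j, x i * y j * ftbl F a b i j k

lemma mul_eq_vec (F : Type*) [Field F] (a b : F) (x y : Fin 8 → F) :
    mul F a b x y = ![
      -(x 0 * y 0) - 2 * (x 4 * y 0),
      (-3 + a) * (x 0 * y 1) + 3 * (x 1 * y 0) + (-3 + b) * (x 4 * y 1),
      (1 - a) * (x 0 * y 2) - 2 * (x 2 * y 0) + (-1 - b) * (x 4 * y 2) + 2 * (x 5 * y 0)
        + 2 * (x 6 * y 0),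
      (3 - 2 * a) * (x 0 * y 3) - 3 * (x 2 * y 2) - 2 * b * (x 4 * y 3) + 3 * (x 5 * y 2)
        + 3 * (x 6 * y 2),
      -(x 0 * y 4) - 2 * (x 4 * y 4),
      (1 - a) * (x 0 * y 5) + x 2 * y 4 + (-1 - b) * (x 4 * y 5) - x 5 * y 4 - x 6 * y 4,
      (1 - a) * (x 0 * y 6) - a * (x 2 * y 0) - b * (x 2 * y 4) + (-1 - b) * (x 4 * y 6)
        + a * (x 5 * y 0) + b * (x 5 * y 4) + a * (x 6 * y 0) + b * (x 6 * y 4),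
      -(x 0 * y 7) - 2 * (x 4 * y 7)] := by
  ext k
  fin_cases k <;>
    simp only [mul, tbl, Fin.sum_univ_eight, Matrix.cons_val, Fin.reduceFinMk, Fin.zero_eta,
      Fin.mk_one, Fin.isValue] <;>
    ring

lemma fmul_eq_vec (F : Type*) [Field F] (a b : F) (x y : Fin 8 → F) :
    fmul F a b x y = ![
      -(x 0 * y 0) - 2 * (x 0 * y 4) - 2 * (x 4 * y 0) - 4 * (x 4 * y 4),
      -(x 0 * y 1) + (1 - a) * (x 1 * y 0) + (-1 - b) * (x 1 * y 4) - 2 * (x 4 * y 1),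
      0, 0, 0, 0, 0, 0] := by
  ext k
  fin_cases k <;>
    simp only [fmul, ftbl, Fin.sum_univ_eight, Matrix.cons_val, Fin.reduceFinMk, Fin.zero_eta,
      Fin.mk_one, Fin.isValue] <;>
    ring

theorem Sab_conservative_general (F : Type*) [Field F] (α β : F) (a b x y : Fin 8 → F) :
    mul F α β b (mul F α β a (mul F α β x y) - mul F α β (mul F α β a x) y - mul F α β x (mul F α β a y)) - mul F α β a (mul F α β (mul F α β b x) y) + mul F α β (mul F α β a (mul F α β b x)) y + mul F α β (mul F α β b x) (mul F α β a y) - mul F α β a (mul F α β x (mul F α β b y)) + mul F α β (mul F α β a x) (mul F α β b y) + mul F α β x (mul F α β a (mul F α β b y))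
      = - mul F α β (fmul F α β a b) (mul F α β x y) + mul F α β (mul F α β (fmul F α β a b) x) y + mul F α β x (mul F α β (fmul F α β a b) y) := by
  simp only [mul_eq_vec, fmul_eq_vec]
  ext k
  fin_cases k <;>
    simp only [Pi.add_apply, Pi.sub_apply, Pi.neg_apply, Matrix.cons_val, Fin.reduceFinMk,
      Fin.zero_eta, Fin.mk_one, Fin.isValue] <;>
    ring

/-- For all `α β`, the algebra `S₍α,β₎`-bar is conservative with the given associated
multiplication. -/
theorem Sab_conservative (F : Type*) [Field F] [CharZero F] (α β : F) (a b x y : Fin 8 → F) :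
    mul F α β b (mul F α β a (mul F α β x y) - mul F α β (mul F α β a x) y - mul F α β x (mul F α β a y)) - mul F α β a (mul F α β (mul F α β b x) y) + mul F α β (mul F α β a (mul F α β b x)) y + mul F α β (mul F α β b x) (mul F α β a y) - mul F α β a (mul F α β x (mul F α β b y)) + mul F α β (mul F α β a x) (mul F α β b y) + mul F α β x (mul F α β a (mul F α β b y))
      = - mul F α β (fmul F α β a b) (mul F α β x y) + mul F α β (mul F α β (fmul F α β a b) x) y + mul F α β x (mul F α β (fmul F α β a b) y) :=
  Sab_conservative_general F α β a b x y
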